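/- arXiv:1708.01090 — 5 statements merged into one kernel-verified Lean document; each statement's English description precedes it below -/
import Mathlib

section
/- Let n ≥ 1 and let G be a nonempty closed subset of [0,1]^{n+1}. If the projection of G to its last coordinate is contained in the projection of G to its first coordinate, i.e. π_n(G) ⊆ π_0(G), then the infinite Mahavier product ⋆_{i=1}^∞ G is nonempty. -/
open Set Filter Topology unitInterval
open scoped Classical

noncomputable section

/-- The shift map on sequences in the unit interval. -/
def shiftMap (x : ℕ → unitInterval) : ℕ → unitInterval := fun n => x (n + 1)

/-- The `m`-fold Mahavier product `⋆_{i=1}^m G` of a set `G ⊆ [0,1]²`. -/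
def MahavierFin (G : Set (unitInterval × unitInterval)) (m : ℕ) :
    Set (Fin (m + 1) → unitInterval) :=
  {x | ∀ i : Fin m, (x i.castSucc, x i.succ) ∈ G}

/-- The infinite Mahavier product `⋆_{i=1}^∞ G` of a set `G ⊆ [0,1]²`. -/
def MahavierInf (G : Set (unitInterval × unitInterval)) : Set (ℕ → unitInterval) :=
  {x | ∀ i : ℕ, (x i, x (i + 1)) ∈ G}

/-- The `m`-fold Mahavier product of `H ⊆ [0,1]^{N+1}`, a subset of `[0,1]^{mN+1}`. -/
def MahavierFinN (N : ℕ) (H : Set (Fin (N + 1) → unitInterval)) (m : ℕ) :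
    Set (Fin (m * N + 1) → unitInterval) :=
  {x | ∀ j : Fin m, (fun i : Fin (N + 1) =>
      x ⟨j.1 * N + i.1, by
        have hi : i.1 ≤ N := Nat.lt_succ_iff.mp i.2
        have hj : j.1 + 1 ≤ m := j.2
        have h : (j.1 + 1) * N ≤ m * N := Nat.mul_le_mul_right N hj
        have h2 : (j.1 + 1) * N = j.1 * N + N := by ring
        omega⟩) ∈ H}

/-- The infinite Mahavier product of `H ⊆ [0,1]^{N+1}`. -/
def MahavierInfN (N : ℕ) (H : Set (Fin (N + 1) → unitInterval)) :
    Set (ℕ → unitInterval) :=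
  {x | ∀ j : ℕ, (fun i : Fin (N + 1) => x (j * N + i.1)) ∈ H}

/-- The least cardinality of a subcollection of `U` covering `K`. -/
def coverNum {X : Type*} (K : Set X) (U : Set (Set X)) : ℕ :=
  sInf {n | ∃ F : Finset (Set X), ↑F ⊆ U ∧ F.card = n ∧ K ⊆ ⋃₀ ↑F}

/-- `α` is a minimal finite cover of `[0,1]` by open intervals: every member is open in
`[0,1]` and order-connected (an interval), `α` covers `[0,1]`, and no proper
subcollection of `α` covers `[0,1]`. -/
def IsMinimalIntervalCover (α : Finset (Set unitInterval)) : Prop :=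
  (∀ u ∈ α, IsOpen u ∧ u.OrdConnected) ∧
  (⋃₀ (α : Set (Set unitInterval)) = Set.univ) ∧
  ∀ β : Finset (Set unitInterval), β ⊆ α →
    ⋃₀ (β : Set (Set unitInterval)) = Set.univ → β = α

/-- The grid cover `α^k` of `[0,1]^k`: all products of `k` members of `α`. -/
def gridCover (α : Finset (Set unitInterval)) (k : ℕ) :
    Set (Set (Fin k → unitInterval)) :=
  {s | ∃ f : Fin k → Set unitInterval, (∀ i, f i ∈ α) ∧ s = {x | ∀ i, x i ∈ f i}}

/-- Entropy of `G ⊆ [0,1]²` relative to the cover `α`: the limit (realized as a `limsup`)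
of `(1/m) log N(⋆_{i=1}^m G, α^{m+1})` if `⋆_{i=1}^∞ G ≠ ∅`, and `0` otherwise. -/
def entOf (G : Set (unitInterval × unitInterval))
    (α : Finset (Set unitInterval)) : ENNReal :=
  if (MahavierInf G).Nonempty then
    Filter.limsup (fun m : ℕ =>
      ENNReal.ofReal
        (Real.log (coverNum (MahavierFin G m) (gridCover α (m + 1))) / m))
      Filter.atTop
  else 0

/-- Topological entropy of `G ⊆ [0,1]²`: the supremum of `entOf G α` over all minimal
open interval covers `α` of `[0,1]`. -/
def ent (G : Set (unitInterval × unitInterval)) : ENNReal :=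
  ⨆ α : {α : Finset (Set unitInterval) // IsMinimalIntervalCover α}, entOf G α.1

/-- Entropy of `H ⊆ [0,1]^{N+1}` relative to the cover `α`. -/
def entOfN (N : ℕ) (H : Set (Fin (N + 1) → unitInterval))
    (α : Finset (Set unitInterval)) : ENNReal :=
  if (MahavierInfN N H).Nonempty then
    Filter.limsup (fun m : ℕ =>
      ENNReal.ofReal
        (Real.log (coverNum (MahavierFinN N H m) (gridCover α (m * N + 1))) / m))
      Filter.atTop
  else 0

/-- Topological entropy of `H ⊆ [0,1]^{N+1}`. -/
def entN (N : ℕ) (H : Set (Fin (N + 1) → unitInterval)) : ENNReal :=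
  ⨆ α : {α : Finset (Set unitInterval) // IsMinimalIntervalCover α}, entOfN N H α.1

/-- An open cover of a topological space. -/
def IsOpenCover {X : Type*} [TopologicalSpace X] (U : Set (Set X)) : Prop :=
  (∀ u ∈ U, IsOpen u) ∧ ⋃₀ U = Set.univ

/-- The join `U ∨ T⁻¹U ∨ ⋯ ∨ T⁻ⁿU` of the open cover `U` under the map `T`. -/
def dynJoin {X : Type*} (T : X → X) (U : Set (Set X)) (n : ℕ) : Set (Set X) :=
  {s | ∃ f : Fin (n + 1) → Set X, (∀ i, f i ∈ U) ∧ s = ⋂ i, T^[i.1] ⁻¹' f i}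

/-- The Adler–Konheim–McAndrew topological entropy of `T : X → X`: the supremum over all
open covers `U` of `X` of `lim (1/n) log N(X, U ∨ T⁻¹U ∨ ⋯ ∨ T⁻ⁿU)` (as a `limsup`). -/
def akmEntropy {X : Type*} [TopologicalSpace X] (T : X → X) : ENNReal :=
  ⨆ U : {U : Set (Set X) // IsOpenCover U},
    Filter.limsup (fun n : ℕ =>
      ENNReal.ofReal (Real.log (coverNum Set.univ (dynJoin T U.1 n)) / n))
      Filter.atTop

/-! Since `π_n(G) ⊆ π_0(G)`, each point of `G` is followed by a point of `G` starting where it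
ends. Iterating from any point of `G` gives a chain of blocks, and laying them end to end, each
overlapping the next in one coordinate, yields a point of the infinite Mahavier product. -/

section Blocks

variable {α : Type*} {n : ℕ}

/-- Consecutive blocks share one index: `j * n + n` reads the first entry of `g (j + 1)`, not the
last entry of `g j`. -/
def concatBlocks (hn : 0 < n) (g : ℕ → Fin (n + 1) → α) (k : ℕ) : α :=
  g (k / n) ⟨k % n, Nat.lt_succ_of_lt (Nat.mod_lt _ hn)⟩

theorem concatBlocks_mul_add (hn : 0 < n) {g : ℕ → Fin (n + 1) → α}
    (hglue : ∀ j, g (j + 1) 0 = g j (Fin.last n)) (j : ℕ) (i : Fin (n + 1)) :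
    concatBlocks hn g (j * n + i) = g j i := by
  rcases (Fin.le_last i).lt_or_eq with hi | rfl
  · have hi : (i : ℕ) < n := hi
    have hdiv : (j * n + i) / n = j := by
      rw [Nat.add_comm, Nat.add_mul_div_right _ _ hn, Nat.div_eq_of_lt hi, Nat.zero_add]
    have hmod : (j * n + i) % n = i := by
      rw [Nat.add_comm, Nat.add_mul_mod_self_right, Nat.mod_eq_of_lt hi]
    simp only [concatBlocks, hdiv, hmod]
  · have hboundary : j * n + n = (j + 1) * n := by ring
    have hdiv : (j * n + n) / n = j + 1 := by rw [hboundary, Nat.mul_div_cancel _ hn]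
    have hmod : (j * n + n) % n = 0 := by rw [hboundary, Nat.mul_mod_left]
    simp only [concatBlocks, Fin.val_last, hdiv, hmod]
    exact hglue j

theorem exists_glued_seq_of_image_last_subset_image_zero {H : Set (Fin (n + 1) → α)}
    (hne : H.Nonempty) (hproj : (fun x => x (Fin.last n)) '' H ⊆ (fun x => x 0) '' H) :
    ∃ g : ℕ → Fin (n + 1) → α, (∀ j, g j ∈ H) ∧ ∀ j, g (j + 1) 0 = g j (Fin.last n) := by
  have hnext : ∀ y : H, ∃ z : H, z.1 0 = y.1 (Fin.last n) := fun y => by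
    obtain ⟨z, hz, hz0⟩ := hproj ⟨y, y.2, rfl⟩
    exact ⟨⟨z, hz⟩, hz0⟩
  choose next hnext using hnext
  obtain ⟨y, hy⟩ := hne
  refine ⟨fun j => (next^[j] ⟨y, hy⟩).1, fun j => (next^[j] _).2, fun j => ?_⟩
  simp only [Function.iterate_succ_apply']
  exact hnext _

end Blocks

theorem concatBlocks_mem_mahavierInfN {n : ℕ} (hn : 0 < n)
    {H : Set (Fin (n + 1) → unitInterval)} {g : ℕ → Fin (n + 1) → unitInterval} (hgH : ∀ j, g j ∈ H)
    (hglue : ∀ j, g (j + 1) 0 = g j (Fin.last n)) :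
    concatBlocks hn g ∈ MahavierInfN n H := fun j => by
  simpa only [concatBlocks_mul_add hn hglue] using hgH j

theorem mahavierInfN_nonempty_of_proj_subset_general
    (n : ℕ) (hn : 1 ≤ n) (G : Set (Fin (n + 1) → unitInterval))
    (hGne : G.Nonempty)
    (hproj : (fun x => x (Fin.last n)) '' G ⊆ (fun x => x 0) '' G) :
    (MahavierInfN n G).Nonempty := by
  obtain ⟨g, hgG, hglue⟩ := exists_glued_seq_of_image_last_subset_image_zero hGne hproj
  exact ⟨concatBlocks hn g, concatBlocks_mem_mahavierInfN hn hgG hglue⟩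

/-- If `G` is a nonempty closed subset of `[0,1]^{n+1}` (`n ≥ 1`) and the
projection of `G` to the last coordinate is contained in the projection of `G` to the
first coordinate, then the infinite Mahavier product of `G` is nonempty. -/
theorem mahavierInfN_nonempty_of_proj_subset
    (n : ℕ) (hn : 1 ≤ n) (G : Set (Fin (n + 1) → unitInterval))
    (hGne : G.Nonempty) (hGcl : IsClosed G)
    (hproj : (fun x => x (Fin.last n)) '' G ⊆ (fun x => x 0) '' G) :
    (MahavierInfN n G).Nonempty :=
  mahavierInfN_nonempty_of_proj_subset_general n hn G hGne hproj
end
end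

section
/- Let G be a closed subset of [0,1]² with ⋆_{i=1}^∞ G ≠ ∅, and let α be a minimal open interval cover of [0,1]. Then for all integers m, k ≥ 1, N(⋆_{i=1}^{m+k} G, α^{m+k+1}) ≤ N(⋆_{i=1}^m G, α^{m+1}) · N(⋆_{i=1}^k G, α^{k+1}); consequently the limit lim_{m→∞} (1/m)·log N(⋆_{i=1}^m G, α^{m+1}) exists and equals inf_{m ≥ 1} (1/m)·log N(⋆_{i=1}^m G, α^{m+1}). -/
open Set Filter Topology unitInterval
open scoped Classical

noncomputable section

/-! Restricting a point of `⋆^{m+k} G` to its first `m + 1` and to its last `k + 1` coordinates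
gives points of `⋆^m G` and `⋆^k G`, and a box of an optimal cover of each glues into a single box
of `α^{m+k+1}`, so the cover numbers are submultiplicative. Fekete's lemma applied to their
logarithms gives the limit. -/

section coverNum

variable {X : Type*} {K : Set X} {U : Set (Set X)}

lemma coverNum_le_card {F : Finset (Set X)} (hFU : ↑F ⊆ U) (hKF : K ⊆ ⋃₀ ↑F) :
    coverNum K U ≤ F.card :=
  Nat.sInf_le ⟨F, hFU, rfl, hKF⟩

lemma exists_finset_card_eq_coverNum (hU : U.Finite) (hKU : K ⊆ ⋃₀ U) :
    ∃ F : Finset (Set X), ↑F ⊆ U ∧ F.card = coverNum K U ∧ K ⊆ ⋃₀ ↑F := by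
  have hcovers : {n | ∃ F : Finset (Set X), ↑F ⊆ U ∧ F.card = n ∧ K ⊆ ⋃₀ ↑F}.Nonempty :=
    ⟨_, hU.toFinset, by simp, rfl, by simpa using hKU⟩
  exact Nat.sInf_mem hcovers

lemma one_le_coverNum (hU : U.Finite) (hKU : K ⊆ ⋃₀ U) (hK : K.Nonempty) :
    1 ≤ coverNum K U := by
  obtain ⟨F, -, hcard, hKF⟩ := exists_finset_card_eq_coverNum hU hKU
  obtain ⟨x, hx⟩ := hK
  obtain ⟨s, hs, -⟩ := hKF hx
  exact hcard ▸ Finset.card_pos.mpr ⟨s, hs⟩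

lemma coverNum_le_mul_of_mapsTo {Y₁ Y₂ : Type*} {K₁ : Set Y₁} {K₂ : Set Y₂}
    {V₁ : Set (Set Y₁)} {V₂ : Set (Set Y₂)} {π₁ : X → Y₁} {π₂ : X → Y₂}
    (hV₁ : V₁.Finite) (hKV₁ : K₁ ⊆ ⋃₀ V₁) (hV₂ : V₂.Finite) (hKV₂ : K₂ ⊆ ⋃₀ V₂)
    (h₁ : MapsTo π₁ K K₁) (h₂ : MapsTo π₂ K K₂)
    (hU : ∀ v₁ ∈ V₁, ∀ v₂ ∈ V₂, ∃ u ∈ U, π₁ ⁻¹' v₁ ∩ π₂ ⁻¹' v₂ ⊆ u) :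
    coverNum K U ≤ coverNum K₁ V₁ * coverNum K₂ V₂ := by
  obtain ⟨F₁, hF₁V, hF₁card, hKF₁⟩ := exists_finset_card_eq_coverNum hV₁ hKV₁
  obtain ⟨F₂, hF₂V, hF₂card, hKF₂⟩ := exists_finset_card_eq_coverNum hV₂ hKV₂
  choose u huU hsub using fun p : ↥(F₁ ×ˢ F₂) =>
    hU _ (hF₁V (Finset.mem_product.1 p.2).1) _ (hF₂V (Finset.mem_product.1 p.2).2)
  have hcover : K ⊆ ⋃₀ ↑(Finset.univ.image u) := by
    intro x hx
    obtain ⟨v₁, hv₁, hxv₁⟩ := hKF₁ (h₁ hx)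
    obtain ⟨v₂, hv₂, hxv₂⟩ := hKF₂ (h₂ hx)
    let p : ↥(F₁ ×ˢ F₂) := ⟨(v₁, v₂), Finset.mem_product.2 ⟨hv₁, hv₂⟩⟩
    exact ⟨u p, by simp, hsub p ⟨hxv₁, hxv₂⟩⟩
  calc coverNum K U ≤ (Finset.univ.image u).card :=
        coverNum_le_card (fun _ hs => by
          obtain ⟨p, -, rfl⟩ := Finset.mem_image.1 hs
          exact huU p) hcover
    _ ≤ (F₁ ×ˢ F₂).card := Finset.card_image_le.trans (Finset.card_univ.trans_le (by simp))
    _ = coverNum K₁ V₁ * coverNum K₂ V₂ := by rw [Finset.card_product, hF₁card, hF₂card]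

end coverNum

section gridCover

variable (α : Finset (Set I))

lemma gridCover_finite (n : ℕ) : (gridCover α n).Finite := by
  refine (Set.finite_range fun f : Fin n → α => {x | ∀ i, x i ∈ (f i : Set I)}).subset ?_
  rintro s ⟨f, hf, rfl⟩
  exact ⟨fun i => ⟨f i, hf i⟩, rfl⟩

variable {α}

lemma sUnion_gridCover (hα : ⋃₀ (α : Set (Set I)) = univ) (n : ℕ) :
    ⋃₀ gridCover α n = univ := by
  refine eq_univ_of_forall fun x => ?_
  have hx : ∀ i, x i ∈ ⋃₀ (α : Set (Set I)) := fun i => hα.symm ▸ mem_univ (x i)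
  choose f hf hxf using hx
  exact ⟨_, ⟨f, hf, rfl⟩, hxf⟩

def initCoords (m k : ℕ) (x : Fin (m + k + 1) → I) : Fin (m + 1) → I :=
  fun i => x (Fin.castLE (by omega) i)

/-- Overlaps `initCoords m k x` in the coordinate `m`. -/
def lastCoords (m k : ℕ) (x : Fin (m + k + 1) → I) : Fin (k + 1) → I :=
  fun j => x (Fin.natAdd m j)

/-- The box built from the first `m + 1` sides of `s` and the last `k` sides of `t`: at the shared
coordinate `m` it keeps only the side of `s`. -/
lemma exists_gridCover_superset_inter_preimage {m k : ℕ} {s : Set (Fin (m + 1) → I)}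
    {t : Set (Fin (k + 1) → I)} (hs : s ∈ gridCover α (m + 1)) (ht : t ∈ gridCover α (k + 1)) :
    ∃ u ∈ gridCover α (m + k + 1), initCoords m k ⁻¹' s ∩ lastCoords m k ⁻¹' t ⊆ u := by
  obtain ⟨f, hfα, rfl⟩ := hs
  obtain ⟨g, hgα, rfl⟩ := ht
  refine ⟨_, ⟨fun i => if h : i.1 ≤ m then f ⟨i, by omega⟩ else g ⟨i - m, by omega⟩,
    fun i => ?_, rfl⟩, ?_⟩
  · dsimp only
    split_ifs
    exacts [hfα _, hgα _]
  · rintro x ⟨hxf, hxg⟩ i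
    dsimp only
    split_ifs with h
    · exact hxf ⟨i, by omega⟩
    · have hi : Fin.natAdd m (⟨i - m, by omega⟩ : Fin (k + 1)) = i :=
        Fin.ext (by simp only [Fin.val_natAdd]; omega)
      simpa only [lastCoords, hi] using hxg ⟨i - m, by omega⟩

end gridCover

lemma MahavierFin.mapsTo_initCoords (G : Set (I × I)) (m k : ℕ) :
    MapsTo (initCoords m k) (MahavierFin G (m + k)) (MahavierFin G m) :=
  fun _ hx i => hx ⟨i, by omega⟩

lemma MahavierFin.mapsTo_lastCoords (G : Set (I × I)) (m k : ℕ) :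
    MapsTo (lastCoords m k) (MahavierFin G (m + k)) (MahavierFin G k) :=
  fun _ hx j => hx ⟨m + j, by omega⟩

lemma MahavierFin.nonempty {G : Set (I × I)} (hG : (MahavierInf G).Nonempty)
    (m : ℕ) : (MahavierFin G m).Nonempty :=
  let ⟨x, hx⟩ := hG
  ⟨fun i => x i, fun i => hx i⟩

lemma coverNum_MahavierFin_add_le_mul (G : Set (I × I))
    {α : Finset (Set I)} (hα : ⋃₀ (α : Set (Set I)) = univ) (m k : ℕ) :
    coverNum (MahavierFin G (m + k)) (gridCover α (m + k + 1)) ≤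
      coverNum (MahavierFin G m) (gridCover α (m + 1)) *
        coverNum (MahavierFin G k) (gridCover α (k + 1)) :=
  coverNum_le_mul_of_mapsTo (gridCover_finite α _) (sUnion_gridCover hα _ ▸ subset_univ _)
    (gridCover_finite α _) (sUnion_gridCover hα _ ▸ subset_univ _)
    (MahavierFin.mapsTo_initCoords G m k) (MahavierFin.mapsTo_lastCoords G m k)
    fun _ hs _ ht => exists_gridCover_superset_inter_preimage hs ht

/-- Fekete's lemma for the logarithms of a submultiplicative sequence of positive integers. -/
lemma tendsto_log_div_iInf_of_submultiplicative {a : ℕ → ℕ} (ha : ∀ n, 0 < a n)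
    (hmul : ∀ m n, a (m + n) ≤ a m * a n) :
    Tendsto (fun n => Real.log (a n) / n) atTop
      (𝓝 (⨅ n : {n : ℕ // 1 ≤ n}, Real.log (a n.1) / n.1)) := by
  have hsub : Subadditive fun n => Real.log (a n) := fun m n =>
    calc Real.log (a (m + n)) ≤ Real.log ((a m : ℝ) * a n) :=
          Real.log_le_log (by exact_mod_cast ha _) (by exact_mod_cast hmul m n)
      _ = Real.log (a m) + Real.log (a n) :=
          Real.log_mul (by exact_mod_cast (ha m).ne') (by exact_mod_cast (ha n).ne')
  have hbdd : BddBelow (range fun n => Real.log (a n) / n) :=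
    ⟨0, by
      rintro _ ⟨n, rfl⟩
      exact div_nonneg (Real.log_nonneg (by exact_mod_cast ha n)) n.cast_nonneg⟩
  convert hsub.tendsto_lim hbdd using 2
  rw [Subadditive.lim, image_eq_range]
  rfl

theorem coverNum_submultiplicative_and_tendsto_general
    (G : Set (unitInterval × unitInterval))
    (hne : (MahavierInf G).Nonempty)
    (α : Finset (Set unitInterval)) (hα : IsMinimalIntervalCover α) :
    (∀ m k : ℕ, 1 ≤ m → 1 ≤ k →
      coverNum (MahavierFin G (m + k)) (gridCover α (m + k + 1)) ≤
        coverNum (MahavierFin G m) (gridCover α (m + 1)) *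
          coverNum (MahavierFin G k) (gridCover α (k + 1))) ∧
    Filter.Tendsto
      (fun m : ℕ =>
        Real.log (coverNum (MahavierFin G m) (gridCover α (m + 1))) / m)
      Filter.atTop
      (nhds (⨅ m : {m : ℕ // 1 ≤ m},
        Real.log (coverNum (MahavierFin G m.1) (gridCover α (m.1 + 1))) / m.1)) := by
  have hmul := coverNum_MahavierFin_add_le_mul G hα.2.1
  refine ⟨fun m k _ _ => hmul m k, tendsto_log_div_iInf_of_submultiplicative (fun n => ?_) hmul⟩
  exact one_le_coverNum (gridCover_finite α _) (sUnion_gridCover hα.2.1 _ ▸ subset_univ _)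
    (MahavierFin.nonempty hne n)

/-- For closed `G ⊆ [0,1]²` with `⋆_{i=1}^∞ G ≠ ∅` and a minimal open
interval cover `α` of `[0,1]`, the cover numbers are submultiplicative, and
`(1/m) log N(⋆_{i=1}^m G, α^{m+1})` converges to its infimum over `m ≥ 1`. -/
theorem coverNum_submultiplicative_and_tendsto
    (G : Set (unitInterval × unitInterval)) (hGcl : IsClosed G)
    (hne : (MahavierInf G).Nonempty)
    (α : Finset (Set unitInterval)) (hα : IsMinimalIntervalCover α) :
    (∀ m k : ℕ, 1 ≤ m → 1 ≤ k →
      coverNum (MahavierFin G (m + k)) (gridCover α (m + k + 1)) ≤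
        coverNum (MahavierFin G m) (gridCover α (m + 1)) *
          coverNum (MahavierFin G k) (gridCover α (k + 1))) ∧
    Filter.Tendsto
      (fun m : ℕ =>
        Real.log (coverNum (MahavierFin G m) (gridCover α (m + 1))) / m)
      Filter.atTop
      (nhds (⨅ m : {m : ℕ // 1 ≤ m},
        Real.log (coverNum (MahavierFin G m.1) (gridCover α (m.1 + 1))) / m.1)) :=
  coverNum_submultiplicative_and_tendsto_general G hne α hα
end
end

section
/- Let N ≥ 1, let H be a closed subset of [0,1]^{N+1}, and let H^{-1} = {(x_N, x_{N-1}, …, x_1, x_0) : (x_0, x_1, …, x_{N-1}, x_N) ∈ H}. Then ent(H) = ent(H^{-1}). -/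
open Set Filter Topology unitInterval
open scoped Classical

noncomputable section

/-! Reversing the coordinates of `x ∈ ⋆_{i=1}^m H` gives a point of `⋆_{i=1}^m H⁻¹`: the `j`-th
block of the reversed tuple is the reversal of the `(m-1-j)`-th block of `x`. As reversal
permutes the members of `α^{mN+1}`, the two finite Mahavier products have equal cover numbers.
For closed `H`, compactness shows that `⋆_{i=1}^∞ H ≠ ∅` iff every finite product is nonempty,
so the two infinite products are empty or nonempty together. -/

section Reversal

variable {α : Type*}

def tupleRev {k : ℕ} (x : Fin k → α) : Fin k → α := fun i => x (Fin.rev i)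

theorem tupleRev_involutive (k : ℕ) : Function.Involutive (tupleRev : (Fin k → α) → _) :=
  fun x => funext fun i => congrArg x (Fin.rev_rev i)

theorem continuous_tupleRev [TopologicalSpace α] (k : ℕ) :
    Continuous (tupleRev : (Fin k → α) → _) :=
  continuous_pi fun i => continuous_apply (Fin.rev i)

end Reversal

theorem coverNum_preimage_of_involutive {X : Type*} {f : X → X} (hf : Function.Involutive f)
    {U : Set (Set X)} (hU : ∀ s ∈ U, f ⁻¹' s ∈ U) (K : Set X) :
    coverNum (f ⁻¹' K) U = coverNum K U := by
  have key : ∀ K : Set X,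
      {n | ∃ F : Finset (Set X), ↑F ⊆ U ∧ F.card = n ∧ K ⊆ ⋃₀ ↑F} ⊆
        {n | ∃ F : Finset (Set X), ↑F ⊆ U ∧ F.card = n ∧ f ⁻¹' K ⊆ ⋃₀ ↑F} := by
    rintro K n ⟨F, hFU, rfl, hcov⟩
    refine ⟨F.image (f ⁻¹' ·), ?_, Finset.card_image_of_injective F
      (Set.preimage_injective.mpr hf.surjective), ?_⟩
    · simpa [Set.subset_def] using fun s hs => hU s (hFU hs)
    · intro x hx
      obtain ⟨s, hsF, hxs⟩ := hcov hx
      exact ⟨f ⁻¹' s, by simpa using ⟨s, hsF, rfl⟩, hxs⟩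
  have hK : f ⁻¹' (f ⁻¹' K) = K := hf.preimage K
  unfold coverNum
  congr 1
  refine Set.Subset.antisymm ?_ (key K)
  simpa only [hK] using key (f ⁻¹' K)

theorem tupleRev_preimage_mem_gridCover (α : Finset (Set unitInterval)) {k : ℕ}
    {s : Set (Fin k → unitInterval)} (hs : s ∈ gridCover α k) :
    tupleRev ⁻¹' s ∈ gridCover α k := by
  obtain ⟨f, hf, rfl⟩ := hs
  refine ⟨fun i => f (Fin.rev i), fun i => hf _, ?_⟩
  ext x
  simp only [Set.mem_preimage, Set.mem_ofPred_eq, tupleRev]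
  rw [Fin.rev_involutive.surjective.forall]
  simp only [Fin.rev_rev]

section MahavierBlocks

variable {N : ℕ} {H : Set (Fin (N + 1) → unitInterval)}

theorem blockIdx_lt {m : ℕ} (j : Fin m) (i : Fin (N + 1)) : j.1 * N + i.1 < m * N + 1 := by
  have hj : (j.1 + 1) * N ≤ m * N := Nat.mul_le_mul_right N j.2
  have hi : i.1 ≤ N := Nat.lt_succ_iff.mp i.2
  rw [Nat.succ_mul] at hj
  omega

def blockIdx {m : ℕ} (j : Fin m) (i : Fin (N + 1)) : Fin (m * N + 1) :=
  ⟨j.1 * N + i.1, blockIdx_lt j i⟩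

theorem mem_MahavierFinN_iff {m : ℕ} {x : Fin (m * N + 1) → unitInterval} :
    x ∈ MahavierFinN N H m ↔ ∀ j : Fin m, (fun i => x (blockIdx j i)) ∈ H :=
  Iff.rfl

theorem rev_blockIdx {m : ℕ} (j : Fin m) (i : Fin (N + 1)) :
    Fin.rev (blockIdx j i) = blockIdx (Fin.rev j) (Fin.rev i) := by
  obtain ⟨k, hk⟩ := Nat.exists_eq_add_of_lt j.2
  have hi : i.1 ≤ N := Nat.lt_succ_iff.mp i.2
  ext
  simp only [blockIdx, Fin.val_rev, hk]
  rw [show j.1 + k + 1 - (j.1 + 1) = k by omega, add_mul, add_mul, one_mul]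
  omega

theorem tupleRev_preimage_MahavierFinN (m : ℕ) :
    tupleRev ⁻¹' MahavierFinN N (tupleRev '' H) m = MahavierFinN N H m := by
  have block_rev (x : Fin (m * N + 1) → unitInterval) (j : Fin m) :
      tupleRev (fun i => tupleRev x (blockIdx j i)) = fun i => x (blockIdx (Fin.rev j) i) :=
    funext fun i => by simp only [tupleRev, rev_blockIdx, Fin.rev_rev]
  ext x
  rw [Set.mem_preimage, mem_MahavierFinN_iff, mem_MahavierFinN_iff,
    ← Fin.revPerm.forall_congr_right (q := fun j => (fun i => x (blockIdx j i)) ∈ H)]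
  refine forall_congr' fun j => ?_
  rw [(tupleRev_involutive _).image_eq_preimage_symm, Set.mem_preimage, block_rev]
  rfl

theorem isClosed_MahavierFinN (hH : IsClosed H) (m : ℕ) : IsClosed (MahavierFinN N H m) := by
  have : MahavierFinN N H m = ⋂ j : Fin m, (fun x i => x (blockIdx j i)) ⁻¹' H :=
    Set.ext fun x => by simp only [mem_MahavierFinN_iff, Set.mem_iInter, Set.mem_preimage]
  rw [this]
  exact isClosed_iInter fun j =>
    hH.preimage (continuous_pi fun i => continuous_apply (blockIdx j i))

theorem MahavierInfN_nonempty_iff (hH : IsClosed H) :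
    (MahavierInfN N H).Nonempty ↔ ∀ m, (MahavierFinN N H m).Nonempty := by
  refine ⟨fun ⟨x, hx⟩ m => ⟨fun i => x i, fun j => hx j⟩, fun hfin => ?_⟩
  let restrict (m : ℕ) (y : ℕ → unitInterval) : Fin (m * N + 1) → unitInterval := fun i => y i
  let V (m : ℕ) := restrict m ⁻¹' MahavierFinN N H m
  have hVcl (m : ℕ) : IsClosed (V m) :=
    (isClosed_MahavierFinN hH m).preimage
      (continuous_pi fun i : Fin (m * N + 1) => continuous_apply (i : ℕ))
  have hVne (m : ℕ) : (V m).Nonempty := by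
    obtain ⟨w, hw⟩ := hfin m
    refine ⟨Function.extend Fin.val w 0, fun j => ?_⟩
    simpa only [restrict, Fin.val_injective.extend_apply] using hw j
  obtain ⟨y, hy⟩ := IsCompact.nonempty_iInter_of_sequence_nonempty_isCompact_isClosed V
    (fun m y hy j => hy j.castSucc) hVne (hVcl 0).isCompact hVcl
  exact ⟨y, fun j => Set.mem_iInter.mp hy (j + 1) ⟨j, j.lt_succ_self⟩⟩

end MahavierBlocks

theorem entOfN_image_tupleRev {N : ℕ} {H : Set (Fin (N + 1) → unitInterval)} (hH : IsClosed H)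
    (α : Finset (Set unitInterval)) : entOfN N (tupleRev '' H) α = entOfN N H α := by
  have hfin (m : ℕ) : MahavierFinN N (tupleRev '' H) m = tupleRev ⁻¹' MahavierFinN N H m := by
    rw [← tupleRev_preimage_MahavierFinN (H := H) m]
    exact ((tupleRev_involutive _).preimage _).symm
  have hinf : (MahavierInfN N (tupleRev '' H)).Nonempty ↔ (MahavierInfN N H).Nonempty := by
    have hrev : IsClosed (tupleRev '' H) := by
      rw [(tupleRev_involutive _).image_eq_preimage_symm]
      exact hH.preimage (continuous_tupleRev _)
    simp only [MahavierInfN_nonempty_iff hrev, MahavierInfN_nonempty_iff hH, hfin,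
      (tupleRev_involutive _).surjective.nonempty_preimage]
  simp only [entOfN, hinf, hfin, coverNum_preimage_of_involutive (tupleRev_involutive _)
    (fun _ => tupleRev_preimage_mem_gridCover α)]

theorem entN_inv_general (N : ℕ) (H : Set (Fin (N + 1) → unitInterval))
    (hHcl : IsClosed H) :
    entN N H = entN N ((fun x => fun i => x (Fin.rev i)) '' H) :=
  iSup_congr fun α => (entOfN_image_tupleRev hHcl α.1).symm

/-- For `N ≥ 1` and a closed `H ⊆ [0,1]^{N+1}`, `ent(H) = ent(H⁻¹)`, where
`H⁻¹` is obtained by reversing the order of the coordinates. -/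
theorem entN_inv (N : ℕ) (hN : 1 ≤ N) (H : Set (Fin (N + 1) → unitInterval))
    (hHcl : IsClosed H) :
    entN N H = entN N ((fun x => fun i => x (Fin.rev i)) '' H) :=
  entN_inv_general N H hHcl
end
end

section
/- Suppose G is a closed subset of [0,1]², 𝐆 = ⋆_{i=1}^∞ G is nonempty, σ(𝐆) = 𝐆, and k ≥ 1 is an integer. Then ent(⋆_{i=1}^k G) = k · ent(G), where ⋆_{i=1}^k G is regarded as a closed subset of [0,1]^{k+1}. -/
open Set Filter Topology unitInterval
open scoped Classical

noncomputable section

/-!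
Covering `⋆_{i=1}^{m+1+n} G` by products of a cover of `⋆_{i=1}^m G` (first `m+1` coordinates)
and one of `⋆_{i=1}^n G` (last `n+1` coordinates) shows that `m ↦ log N(⋆_{i=1}^m G, α^{m+1})`
is subadditive up to a shift, so by Fekete's lemma `(1/m) log N(⋆_{i=1}^m G, α^{m+1})`
converges for every cover `α`. Since `⋆_{i=1}^m (⋆_{i=1}^k G) = ⋆_{i=1}^{mk} G`, the sequence
defining the entropy of `⋆_{i=1}^k G` relative to `α` is `k` times a subsequence of it.
-/

lemma subadditive_sub_one {v : ℕ → ℝ} (h0 : 0 ≤ v 0)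
    (hv : ∀ m n, v (m + 1 + n) ≤ v m + v n) : Subadditive (fun n => v (n - 1)) := by
  rintro (_ | a) (_ | b)
  · simpa using h0
  · simpa using h0
  · simpa using h0
  · have hab : a + 1 + (b + 1) - 1 = a + 1 + b := by omega
    simpa only [hab, Nat.add_sub_cancel] using hv a b

lemma exists_tendsto_div_of_add_one_add_le {v : ℕ → ℝ} (h0 : ∀ n, 0 ≤ v n)
    (hv : ∀ m n, v (m + 1 + n) ≤ v m + v n) :
    ∃ L, Tendsto (fun n : ℕ => v n / n) atTop (𝓝 L) := by
  have hsub := subadditive_sub_one (h0 0) hv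
  have hbdd : BddBelow (range fun n : ℕ => v (n - 1) / n) :=
    ⟨0, by rintro _ ⟨n, rfl⟩; exact div_nonneg (h0 _) n.cast_nonneg⟩
  refine ⟨hsub.lim, ?_⟩
  have hshift : Tendsto (fun n : ℕ => v n / (n + 1 : ℕ)) atTop (𝓝 hsub.lim) :=
    (hsub.tendsto_lim hbdd).comp (tendsto_add_atTop_nat 1)
  have hratio : Tendsto (fun n : ℕ => (n : ℝ) / (n + 1 : ℕ)) atTop (𝓝 1) := by
    simpa using tendsto_natCast_div_add_atTop (1 : ℝ)
  refine (div_one hsub.lim ▸ hshift.div hratio one_ne_zero).congr' ?_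
  filter_upwards [eventually_ne_atTop 0] with n hn
  have : (n : ℝ) + 1 ≠ 0 := by positivity
  simp only [Pi.div_apply, Nat.cast_add, Nat.cast_one]
  field_simp

lemma Filter.Tendsto.comp_mul_div {f : ℕ → ℝ} {L : ℝ}
    (h : Tendsto (fun n : ℕ => f n / n) atTop (𝓝 L)) {k : ℕ} (hk : 0 < k) :
    Tendsto (fun m : ℕ => f (m * k) / m) atTop (𝓝 (k * L)) := by
  have hmul : Tendsto (fun m : ℕ => m * k) atTop atTop :=
    tendsto_id.atTop_mul_const' hk
  refine ((h.comp hmul).const_mul (k : ℝ)).congr' ?_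
  filter_upwards [eventually_ne_atTop 0] with m hm
  have : (k : ℝ) ≠ 0 := by positivity
  simp only [Function.comp_apply, Nat.cast_mul]
  field_simp

section CoverNum

variable {X : Type*} {K : Set X} {U : Set (Set X)}

lemma exists_card_eq_coverNum (h : ∃ F : Finset (Set X), ↑F ⊆ U ∧ K ⊆ ⋃₀ ↑F) :
    ∃ F : Finset (Set X), ↑F ⊆ U ∧ F.card = coverNum K U ∧ K ⊆ ⋃₀ ↑F := by
  obtain ⟨F, hFU, hKF⟩ := h
  exact Nat.sInf_mem (s := {n | ∃ F : Finset (Set X), ↑F ⊆ U ∧ F.card = n ∧ K ⊆ ⋃₀ ↑F})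
    ⟨F.card, F, hFU, rfl, hKF⟩

lemma one_le_coverNum_s12 (hK : K.Nonempty) (h : ∃ F : Finset (Set X), ↑F ⊆ U ∧ K ⊆ ⋃₀ ↑F) :
    1 ≤ coverNum K U := by
  obtain ⟨F, -, hcard, hKF⟩ := exists_card_eq_coverNum h
  obtain ⟨s, hs, -⟩ := hKF hK.some_mem
  rw [← hcard]
  exact Finset.card_pos.mpr ⟨s, hs⟩

end CoverNum

section GridCover

variable {α : Finset (Set unitInterval)}

lemma exists_finset_subset_gridCover (hα : ⋃₀ (α : Set (Set unitInterval)) = univ) (n : ℕ)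
    (K : Set (Fin n → unitInterval)) :
    ∃ F : Finset (Set (Fin n → unitInterval)), ↑F ⊆ gridCover α n ∧ K ⊆ ⋃₀ ↑F := by
  have hfin : (gridCover α n).Finite :=
    (finite_range fun f : Fin n → α => {x | ∀ i, x i ∈ (f i : Set unitInterval)}).subset
      (by rintro _ ⟨f, hf, rfl⟩; exact ⟨fun i => ⟨f i, hf i⟩, rfl⟩)
  refine ⟨hfin.toFinset, by simp, fun x _ => ?_⟩
  have hx : ∀ i, ∃ u ∈ α, x i ∈ u := fun i => mem_sUnion.mp (hα ▸ mem_univ (x i))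
  choose u hu hxu using hx
  exact ⟨_, hfin.mem_toFinset.mpr ⟨u, hu, rfl⟩, hxu⟩

lemma append_mem_gridCover {a b : ℕ} {s : Set (Fin a → unitInterval)}
    {t : Set (Fin b → unitInterval)} (hs : s ∈ gridCover α a) (ht : t ∈ gridCover α b) :
    {x : Fin (a + b) → unitInterval | x ∘ Fin.castAdd b ∈ s ∧ x ∘ Fin.natAdd a ∈ t} ∈
      gridCover α (a + b) := by
  obtain ⟨f, hf, rfl⟩ := hs
  obtain ⟨g, hg, rfl⟩ := ht
  refine ⟨Fin.append f g, Fin.addCases (by simpa using hf) (by simpa using hg), ?_⟩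
  ext x
  simp [Fin.forall_fin_add]

lemma coverNum_gridCover_add_le (hα : ⋃₀ (α : Set (Set unitInterval)) = univ) {a b : ℕ}
    {K : Set (Fin (a + b) → unitInterval)} {K₁ : Set (Fin a → unitInterval)}
    {K₂ : Set (Fin b → unitInterval)}
    (hK : ∀ x ∈ K, x ∘ Fin.castAdd b ∈ K₁ ∧ x ∘ Fin.natAdd a ∈ K₂) :
    coverNum K (gridCover α (a + b)) ≤
      coverNum K₁ (gridCover α a) * coverNum K₂ (gridCover α b) := by
  obtain ⟨F₁, hF₁, hcard₁, hK₁⟩ := exists_card_eq_coverNum (exists_finset_subset_gridCover hα a K₁)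
  obtain ⟨F₂, hF₂, hcard₂, hK₂⟩ := exists_card_eq_coverNum (exists_finset_subset_gridCover hα b K₂)
  let F := (F₁ ×ˢ F₂).image fun p =>
    {x : Fin (a + b) → unitInterval | x ∘ Fin.castAdd b ∈ p.1 ∧ x ∘ Fin.natAdd a ∈ p.2}
  have hFU : ↑F ⊆ gridCover α (a + b) := by
    simp only [F, Finset.coe_image, image_subset_iff]
    rintro ⟨s, t⟩ hst
    rw [Finset.mem_coe, Finset.mem_product] at hst
    exact append_mem_gridCover (hF₁ hst.1) (hF₂ hst.2)
  have hKF : K ⊆ ⋃₀ ↑F := by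
    intro x hx
    obtain ⟨s, hs, hxs⟩ := hK₁ (hK x hx).1
    obtain ⟨t, ht, hxt⟩ := hK₂ (hK x hx).2
    have hst : (s, t) ∈ F₁ ×ˢ F₂ := Finset.mem_product.mpr ⟨hs, ht⟩
    exact ⟨_, Finset.mem_coe.mpr (Finset.mem_image_of_mem _ hst), hxs, hxt⟩
  calc coverNum K (gridCover α (a + b)) ≤ F.card := coverNum_le_card hFU hKF
    _ ≤ (F₁ ×ˢ F₂).card := Finset.card_image_le
    _ = _ := by rw [Finset.card_product, hcard₁, hcard₂]

end GridCover

section Mahavier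

variable {G : Set (unitInterval × unitInterval)}

lemma mahavierFin_nonempty (hne : (MahavierInf G).Nonempty) (m : ℕ) :
    (MahavierFin G m).Nonempty := by
  obtain ⟨x, hx⟩ := hne
  exact ⟨fun i => x i, fun i => hx i⟩

-- `m + 1 + n + 1` unfolds to `(m + 1) + (n + 1)`, so `Fin.castAdd` and `Fin.natAdd` apply as is.
lemma mahavierFin_add_split {m n : ℕ} {x : Fin (m + 1 + n + 1) → unitInterval}
    (hx : x ∈ MahavierFin G (m + 1 + n)) :
    x ∘ Fin.castAdd (n + 1) ∈ MahavierFin G m ∧ x ∘ Fin.natAdd (m + 1) ∈ MahavierFin G n :=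
  ⟨fun i => hx ⟨i, by omega⟩, fun i => hx ⟨m + 1 + i, by omega⟩⟩

lemma coverNum_mahavierFin_add_le {α : Finset (Set unitInterval)}
    (hα : ⋃₀ (α : Set (Set unitInterval)) = univ) (m n : ℕ) :
    coverNum (MahavierFin G (m + 1 + n)) (gridCover α (m + 1 + n + 1)) ≤
      coverNum (MahavierFin G m) (gridCover α (m + 1)) *
        coverNum (MahavierFin G n) (gridCover α (n + 1)) :=
  coverNum_gridCover_add_le (a := m + 1) (b := n + 1) hα fun _ => mahavierFin_add_split

lemma exists_tendsto_log_coverNum_mahavierFin {α : Finset (Set unitInterval)}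
    (hα : ⋃₀ (α : Set (Set unitInterval)) = univ) (hne : (MahavierInf G).Nonempty) :
    ∃ L, Tendsto (fun m : ℕ =>
      Real.log (coverNum (MahavierFin G m) (gridCover α (m + 1))) / m) atTop (𝓝 L) := by
  have hpos m : (0 : ℝ) < coverNum (MahavierFin G m) (gridCover α (m + 1)) := by
    exact_mod_cast one_le_coverNum_s12 (mahavierFin_nonempty hne m)
      (exists_finset_subset_gridCover hα _ _)
  refine exists_tendsto_div_of_add_one_add_le (fun m => Real.log_nonneg ?_) fun m n => ?_
  · exact_mod_cast hpos m
  · rw [← Real.log_mul (hpos m).ne' (hpos n).ne']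
    exact Real.log_le_log (hpos _) (by exact_mod_cast coverNum_mahavierFin_add_le hα m n)

lemma mahavierFinN_mahavierFin (k m : ℕ) :
    MahavierFinN k (MahavierFin G k) m = MahavierFin G (m * k) := by
  ext x
  simp only [MahavierFinN, MahavierFin, mem_ofPred_eq]
  constructor
  · intro h p
    have hk : 0 < k := Nat.pos_of_ne_zero fun hk => by simpa [hk] using p.2
    have hp : p / k * k + p % k = p := Nat.div_add_mod' p k
    convert h ⟨p / k, Nat.div_lt_of_lt_mul (by linarith [p.2])⟩ ⟨p % k, Nat.mod_lt p hk⟩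
      using 3 <;> simp only [Fin.ext_iff, Fin.val_castSucc, Fin.val_succ] <;> omega
  · intro h j i
    exact h ⟨j * k + i, by nlinarith [j.2, i.2]⟩

lemma mahavierInfN_mahavierFin {k : ℕ} (hk : 0 < k) :
    MahavierInfN k (MahavierFin G k) = MahavierInf G := by
  ext x
  simp only [MahavierInfN, MahavierFin, MahavierInf, mem_ofPred_eq]
  constructor
  · intro h p
    have hp : p / k * k + p % k = p := Nat.div_add_mod' p k
    convert h (p / k) ⟨p % k, Nat.mod_lt p hk⟩ using 3 <;>
      simp only [Fin.val_castSucc, Fin.val_succ] <;> omega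
  · intro h j i
    exact h (j * k + i)

end Mahavier

lemma entOfN_mahavierFin {G : Set (unitInterval × unitInterval)} {k : ℕ} (hk : 0 < k)
    {α : Finset (Set unitInterval)} (hα : ⋃₀ (α : Set (Set unitInterval)) = univ) :
    entOfN k (MahavierFin G k) α = k * entOf G α := by
  rw [entOfN, entOf, mahavierInfN_mahavierFin hk]
  split_ifs with hne
  · obtain ⟨L, hL⟩ := exists_tendsto_log_coverNum_mahavierFin hα hne
    simp only [mahavierFinN_mahavierFin]
    rw [(ENNReal.tendsto_ofReal (hL.comp_mul_div hk)).limsup_eq,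
      (ENNReal.tendsto_ofReal hL).limsup_eq,
      ENNReal.ofReal_mul k.cast_nonneg, ENNReal.ofReal_natCast]
  · rw [mul_zero]

theorem entN_mahavierFin_eq_mul_general
    (G : Set (unitInterval × unitInterval))
    (k : ℕ) (hk : 1 ≤ k) :
    entN k (MahavierFin G k) = (k : ENNReal) * ent G := by
  rw [entN, ent, ENNReal.mul_iSup]
  exact iSup_congr fun α => entOfN_mahavierFin hk α.2.2.1

/-- For closed `G ⊆ [0,1]²` with `𝐆 = ⋆_{i=1}^∞ G ≠ ∅`, `σ(𝐆) = 𝐆`, and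
`k ≥ 1`, the entropy of the `k`-fold Mahavier product `⋆_{i=1}^k G` (as a closed subset
of `[0,1]^{k+1}`) equals `k · ent(G)`. -/
theorem entN_mahavierFin_eq_mul
    (G : Set (unitInterval × unitInterval)) (hGcl : IsClosed G)
    (hne : (MahavierInf G).Nonempty)
    (hσ : shiftMap '' MahavierInf G = MahavierInf G)
    (k : ℕ) (hk : 1 ≤ k) :
    entN k (MahavierFin G k) = (k : ENNReal) * ent G :=
  entN_mahavierFin_eq_mul_general G k hk
end
end

section
/- Let G = {(x,y) ∈ [0,1]² : y ≤ x}. Then ent(G) = 0. -/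
open Set Filter Topology unitInterval
open scoped Classical

noncomputable section

/-! A sequence in the Mahavier product of a subset of the triangle `y ≤ x` is nonincreasing.
By the Lebesgue number lemma each cell `[l/n, (l+1)/n)` of a fine enough grid lies in a single
member of `α`, so such a sequence lies in the product of the members chosen for the cells of its
terms, and the sequence of those cells is nonincreasing. There are at most `(m + 2)^(n + 1)`
nonincreasing maps `Fin (m + 1) → Fin (n + 1)`, so `N(⋆_{i=1}^m G, α^{m+1})` grows polynomially
in `m`. -/

open Finset

theorem Fin.lt_card_filter_iff_of_isLowerSet {k : ℕ} {p : Fin k → Prop}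
    (hp : IsLowerSet {j | p j}) (i : Fin k) :
    (i : ℕ) < #({j | p j} : Finset (Fin k)) ↔ p i := by
  constructor
  · intro hi
    by_contra hpi
    have hsub : ({j | p j} : Finset (Fin k)) ⊆ Finset.Iio i := fun j hj =>
      Finset.mem_Iio.2 (lt_of_not_ge fun hij => hpi (hp hij (Finset.mem_filter.1 hj).2))
    exact absurd (Finset.card_le_card hsub) (by simpa using hi)
  · intro hpi
    have hsub : Finset.Iic i ⊆ ({j | p j} : Finset (Fin k)) := fun j hj =>
      Finset.mem_filter.2 ⟨Finset.mem_univ j, hp (Finset.mem_Iic.1 hj) hpi⟩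
    have := Finset.card_le_card hsub
    rw [Fin.card_Iic] at this
    omega

-- An antitone `c` is recovered from the sizes of its upper level sets, which are initial segments.
theorem card_filter_antitone_le {β : Type*} [Fintype β] [PartialOrder β] (k : ℕ) :
    #({c : Fin k → β | Antitone c} : Finset (Fin k → β)) ≤ (k + 1) ^ Fintype.card β := by
  let levels : (Fin k → β) → β → Fin (k + 1) := fun c b =>
    ⟨#({i | b ≤ c i} : Finset (Fin k)),
      Nat.lt_succ_of_le ((card_filter_le _ _).trans (by simp))⟩
  have hinj : Set.InjOn levels {c | Antitone c} := by
    intro c hc d hd hcd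
    have hle : ∀ b i, b ≤ c i ↔ b ≤ d i := fun b i => by
      rw [← Fin.lt_card_filter_iff_of_isLowerSet (p := fun j => b ≤ c j)
          (fun _ _ hji hj => le_trans hj (hc hji)),
        ← Fin.lt_card_filter_iff_of_isLowerSet (p := fun j => b ≤ d j)
          (fun _ _ hji hj => le_trans hj (hd hji))]
      exact iff_of_eq (congrArg (fun f => (i : ℕ) < (f b : ℕ)) hcd)
    funext i
    exact le_antisymm ((hle _ i).1 le_rfl) ((hle _ i).2 le_rfl)
  simpa using card_le_card_of_injOn levels (fun c _ => mem_univ (levels c))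
    (by simpa using hinj)

theorem antitone_of_mem_mahavierFin {G : Set (unitInterval × unitInterval)}
    (hG : G ⊆ {p | p.2 ≤ p.1}) {m : ℕ} {x : Fin (m + 1) → unitInterval}
    (hx : x ∈ MahavierFin G m) : Antitone x :=
  Fin.antitone_iff_succ_le.2 fun i => hG (hx i)

def gridIndex (n : ℕ) (x : unitInterval) : Fin (n + 1) :=
  ⟨⌊(n : ℝ) * x⌋₊, Nat.lt_succ_of_le <| Nat.floor_le_of_le <|
    mul_le_of_le_one_right n.cast_nonneg x.2.2⟩

theorem monotone_gridIndex (n : ℕ) : Monotone (gridIndex n) := fun _ _ hxy =>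
  Fin.mk_le_mk.2 <| Nat.floor_le_floor <| mul_le_mul_of_nonneg_left hxy n.cast_nonneg

theorem exists_gridIndex_subordinate {α : Set (Set unitInterval)} (hopen : ∀ u ∈ α, IsOpen u)
    (hcov : ⋃₀ α = univ) :
    ∃ n, ∀ l : Fin (n + 1), ∃ u ∈ α, {x | gridIndex n x = l} ⊆ u := by
  obtain ⟨δ, hδ, hball⟩ := lebesgue_number_lemma_of_metric_sUnion isCompact_univ hopen hcov.ge
  obtain ⟨k, hk⟩ := exists_nat_one_div_lt hδ
  refine ⟨k + 1, fun l => ?_⟩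
  have hk0 : (0 : ℝ) < (k + 1 : ℕ) := by positivity
  have hl : (l : ℝ) / (k + 1 : ℕ) ∈ Icc (0 : ℝ) 1 :=
    ⟨by positivity, (div_le_one hk0).2 (by exact_mod_cast Nat.lt_succ_iff.1 l.2)⟩
  obtain ⟨u, hu, hδu⟩ := hball ⟨_, hl⟩ (mem_univ _)
  refine ⟨u, hu, fun x hx => hδu ?_⟩
  have hfloor : ⌊((k + 1 : ℕ) : ℝ) * x⌋₊ = l := congrArg Fin.val hx
  have hlo : (l : ℝ) ≤ (k + 1 : ℕ) * x := hfloor ▸ Nat.floor_le (mul_nonneg hk0.le x.2.1)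
  have hhi : (k + 1 : ℕ) * (x : ℝ) < l + 1 := hfloor ▸ Nat.lt_floor_add_one _
  rw [Metric.mem_ball, Subtype.dist_eq, Real.dist_eq, abs_lt]
  push_cast at hk hk0 hlo hhi ⊢
  have hlx : (l : ℝ) / (k + 1) ≤ x := (div_le_iff₀ hk0).2 (by linarith)
  have hxl : (x : ℝ) < l / (k + 1) + 1 / (k + 1) := by
    rw [← add_div]
    exact (lt_div_iff₀ hk0).2 (by linarith)
  constructor <;> linarith

theorem coverNum_mahavierFin_le {G : Set (unitInterval × unitInterval)}
    (hG : G ⊆ {p | p.2 ≤ p.1}) {α : Finset (Set unitInterval)} {β : Type*} [Fintype β]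
    [PartialOrder β] {r : unitInterval → β} (hr : Monotone r) {u : β → Set unitInterval}
    (hu : ∀ b, u b ∈ α) (hru : ∀ x, x ∈ u (r x)) (m : ℕ) :
    coverNum (MahavierFin G m) (gridCover α (m + 1)) ≤ (m + 2) ^ Fintype.card β := by
  let cell : (Fin (m + 1) → β) → Set (Fin (m + 1) → unitInterval) :=
    fun c => {x | ∀ i, x i ∈ u (c i)}
  let F := ({c | Antitone c} : Finset (Fin (m + 1) → β)).image cell
  have hFgrid : ↑F ⊆ gridCover α (m + 1) := by
    simp only [F, coe_image, image_subset_iff]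
    exact fun c _ => ⟨fun i => u (c i), fun i => hu _, rfl⟩
  have hFcov : MahavierFin G m ⊆ ⋃₀ ↑F := fun x hx =>
    ⟨cell (r ∘ x), mem_image_of_mem cell <| by
      simpa using hr.comp_antitone (antitone_of_mem_mahavierFin hG hx),
      fun i => hru (x i)⟩
  calc coverNum (MahavierFin G m) (gridCover α (m + 1))
      ≤ #F := Nat.sInf_le ⟨F, hFgrid, rfl, hFcov⟩
    _ ≤ #({c | Antitone c} : Finset (Fin (m + 1) → β)) := card_image_le
    _ ≤ (m + 2) ^ Fintype.card β := card_filter_antitone_le (m + 1)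

theorem exists_coverNum_mahavierFin_le_pow {G : Set (unitInterval × unitInterval)}
    (hG : G ⊆ {p | p.2 ≤ p.1}) {α : Finset (Set unitInterval)} (hopen : ∀ u ∈ α, IsOpen u)
    (hcov : ⋃₀ (α : Set (Set unitInterval)) = univ) :
    ∃ K, ∀ m, coverNum (MahavierFin G m) (gridCover α (m + 1)) ≤ (m + 2) ^ K := by
  obtain ⟨n, hn⟩ := exists_gridIndex_subordinate hopen hcov
  choose u hu hsub using hn
  exact ⟨n + 1, fun m => by
    simpa using
      coverNum_mahavierFin_le hG (monotone_gridIndex n) hu (fun x => hsub _ rfl) m⟩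

theorem limsup_ofReal_log_div_eq_zero {c : ℕ → ℕ} {K : ℕ}
    (hc : ∀ m, c m ≤ (m + 2) ^ K) :
    limsup (fun m : ℕ => ENNReal.ofReal (Real.log (c m) / m)) atTop = 0 := by
  have hlog : Tendsto (fun m : ℕ => Real.log ((m : ℝ) + 2) / m) atTop (𝓝 0) := by
    have h := (Real.tendsto_pow_log_div_mul_add_atTop 1 (-2) 1 one_ne_zero).comp
      (tendsto_atTop_add_const_right _ 2 tendsto_natCast_atTop_atTop)
    simpa [Function.comp_def] using h
  have hlogc : ∀ m : ℕ, Real.log (c m) ≤ K * Real.log ((m : ℝ) + 2) := fun m => by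
    rcases (c m).eq_zero_or_pos with h0 | hpos
    · rw [h0, Nat.cast_zero, Real.log_zero]
      exact mul_nonneg K.cast_nonneg (Real.log_nonneg (by linarith [m.cast_nonneg (α := ℝ)]))
    · rw [← Real.log_pow]
      exact Real.log_le_log (by exact_mod_cast hpos) (by exact_mod_cast hc m)
  have hle : ∀ m : ℕ, Real.log (c m) / m ≤ K * (Real.log ((m : ℝ) + 2) / m) := fun m => by
    rw [← mul_div_assoc]
    exact div_le_div_of_nonneg_right (hlogc m) m.cast_nonneg
  have hreal : Tendsto (fun m : ℕ => Real.log (c m) / m) atTop (𝓝 0) :=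
    squeeze_zero (fun m => div_nonneg (Real.log_natCast_nonneg _) m.cast_nonneg) hle
      (by simpa using hlog.const_mul (K : ℝ))
  simpa using (ENNReal.tendsto_ofReal hreal).limsup_eq

theorem entOf_eq_zero_of_subset {G : Set (unitInterval × unitInterval)}
    (hG : G ⊆ {p | p.2 ≤ p.1}) {α : Finset (Set unitInterval)} (hopen : ∀ u ∈ α, IsOpen u)
    (hcov : ⋃₀ (α : Set (Set unitInterval)) = univ) : entOf G α = 0 := by
  obtain ⟨K, hK⟩ := exists_coverNum_mahavierFin_le_pow hG hopen hcov
  rw [entOf, limsup_ofReal_log_div_eq_zero hK, ite_self]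

theorem ent_eq_zero_of_subset {G : Set (unitInterval × unitInterval)}
    (hG : G ⊆ {p | p.2 ≤ p.1}) : ent G = 0 :=
  ENNReal.iSup_eq_zero.2 fun α =>
    entOf_eq_zero_of_subset hG (fun u hu => (α.2.1 u hu).1) α.2.2.1

/-- the Triangle Example: the set `G = {(x,y) ∈ [0,1]² : y ≤ x}` has
topological entropy `0`. -/
theorem ent_triangle_eq_zero :
    ent {p : unitInterval × unitInterval | p.2 ≤ p.1} = 0 :=
  ent_eq_zero_of_subset subset_rfl
end
end
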